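/- arXiv:2206.12591 — 2 statements merged into one kernel-verified Lean document; each statement's English description precedes it below -/
import Mathlib

section
/- Let M be a Hopf–von Neumann algebra, P its normal states, x ∈ WAP(M) and μ ∈ P. If c·1 lies in the weak closure of P.(x.μ − x), then c = 0. -/
/-- let `M` be a Hopf–von Neumann algebra with unit `one`, `P` its
normal states (a set of contractive functionals), with the commuting contractive left
and right module actions `actL ν = (y ↦ ν.y)` and `actR μ = (y ↦ y.μ)` of the predual,
fixing `1` for states.  If `x ∈ WAP(M)`, i.e. the orbit `{ν.x : ‖ν‖ ≤ 1}` is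
relatively compact in the weak topology of `M`, `μ ∈ P`, and `c • 1` lies in the weak
closure of `P.(x.μ − x)`, then `c = 0`. -/
theorem stmt_10 {M : Type*} [NormedAddCommGroup M] [NormedSpace ℂ M]
    (one : M) (hone : one ≠ 0)
    (P : Set (M →L[ℂ] ℂ)) (hP : P ⊆ {ν : M →L[ℂ] ℂ | ‖ν‖ ≤ 1})
    (actL actR : (M →L[ℂ] ℂ) → (M →L[ℂ] M))
    (hLc : ∀ ν ∈ P, ‖actL ν‖ ≤ 1) (hRc : ∀ μ ∈ P, ‖actR μ‖ ≤ 1)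
    (hcomm : ∀ μ ν : M →L[ℂ] ℂ, (actR μ).comp (actL ν) = (actL ν).comp (actR μ))
    (hRone : ∀ μ ∈ P, actR μ one = one)
    (x : M)
    (hwap : IsCompact (closure (X := WeakSpace ℂ M)
      ((fun ν => actL ν x) '' {ν : M →L[ℂ] ℂ | ‖ν‖ ≤ 1})))
    (μ : M →L[ℂ] ℂ) (hμ : μ ∈ P) (c : ℂ)
    (hc : c • one ∈ closure (X := WeakSpace ℂ M)
      ((fun ν => actL ν (actR μ x - x)) '' P)) :
    c = 0 := by
  -- the weak topology is Hausdorff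
  have hinj : Function.Injective ((topDualPairing ℂ M).flip) := by
    intro a b hab
    by_contra hne
    obtain ⟨f, hf⟩ := SeparatingDual.exists_ne_zero (R := ℂ) (sub_ne_zero.mpr hne)
    have := congrArg (fun g : (M →L[ℂ] ℂ) →ₗ[ℂ] ℂ => g f) hab
    simp only [LinearMap.flip_apply] at this
    exact hf (by simpa [map_sub, sub_eq_zero] using this)
  haveI : T2Space (WeakSpace ℂ M) := (WeakBilin.isEmbedding hinj).t2Space
  set T : M →L[ℂ] M := actR μ - ContinuousLinearMap.id ℂ M with hT
  set K := closure (X := WeakSpace ℂ M)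
      ((fun ν => actL ν x) '' {ν : M →L[ℂ] ℂ | ‖ν‖ ≤ 1}) with hKdef
  have hTK : IsCompact ((WeakSpace.map T) '' K) := hwap.image (WeakSpace.map T).continuous
  have hsub : ((fun ν => actL ν (actR μ x - x)) '' P) ⊆ (WeakSpace.map T) '' K := by
    rintro - ⟨ν, hν, rfl⟩
    refine ⟨actL ν x, subset_closure ⟨ν, hP hν, rfl⟩, ?_⟩
    show T (actL ν x) = actL ν (actR μ x - x)
    have h1 : actR μ (actL ν x) = actL ν (actR μ x) :=
      congrFun (congrArg (fun g : M →L[ℂ] M => (g : M → M)) (hcomm μ ν)) x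
    simp [hT, ContinuousLinearMap.sub_apply, map_sub, h1]
  have hcl : c • one ∈ (WeakSpace.map T) '' K :=
    (hTK.isClosed.closure_subset_iff.mpr hsub) hc
  obtain ⟨y, -, hy⟩ := hcl
  set z : M := y with hz
  have hy2 : actR μ z - z = c • one := hy
  have hy' : actR μ z = z + c • one := by rw [← hy2]; abel
  have hiter : ∀ k : ℕ, (fun w => actR μ w)^[k] z = z + (k : ℂ) • (c • one) := by
    intro k
    induction k with
    | zero => simp
    | succ n ih =>
      rw [Function.iterate_succ_apply', ih, map_add, map_smul, map_smul, hRone μ hμ, hy']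
      push_cast
      rw [add_smul, one_smul]
      abel
  have hnorm : ∀ k : ℕ, ‖(fun w => actR μ w)^[k] z‖ ≤ ‖z‖ := by
    intro k
    induction k with
    | zero => simp
    | succ n ih =>
      rw [Function.iterate_succ_apply']
      calc ‖actR μ ((fun w => actR μ w)^[n] z)‖
          ≤ ‖actR μ‖ * ‖(fun w => actR μ w)^[n] z‖ := (actR μ).le_opNorm _
        _ ≤ 1 * ‖z‖ := mul_le_mul (hRc μ hμ) ih (norm_nonneg _) zero_le_one
        _ = ‖z‖ := one_mul _
  have key : ∀ k : ℕ, (k : ℝ) * ‖c • one‖ ≤ 2 * ‖z‖ := by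
    intro k
    have h1 := hnorm k
    rw [hiter k] at h1
    have h2 : ‖(k : ℂ) • (c • one)‖ = (k : ℝ) * ‖c • one‖ := by
      rw [norm_smul]; simp
    calc (k : ℝ) * ‖c • one‖ = ‖(k : ℂ) • (c • one)‖ := h2.symm
      _ = ‖(z + (k : ℂ) • (c • one)) - z‖ := by rw [add_sub_cancel_left]
      _ ≤ ‖z + (k : ℂ) • (c • one)‖ + ‖z‖ := norm_sub_le _ _
      _ ≤ ‖z‖ + ‖z‖ := by linarith
      _ = 2 * ‖z‖ := by ring
  by_contra hc0
  have hpos : 0 < ‖c • one‖ := by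
    rw [norm_smul]
    exact mul_pos (norm_pos_iff.mpr hc0) (norm_pos_iff.mpr hone)
  obtain ⟨k, hk⟩ := exists_nat_gt (2 * ‖z‖ / ‖c • one‖)
  have h3 := key k
  rw [div_lt_iff₀ hpos] at hk
  linarith
end

section
/- Let V be a reflexive Banach space and (π, ξ) a left covariant representation of a Banach algebra A on V (π: A → B(V) a contractive homomorphism, ξ: A → V a contractive linear map with ξ(ab) = π(a)ξ(b)). Suppose A has a bounded approximate identity (a_i) with ‖a_i‖ ≤ 1. Then there exists ξ₀ ∈ V with ‖ξ₀‖ ≤ 1 and ξ(a) = π(a)ξ₀ for all a ∈ A. -/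
/-! The net `ξ (u i)` lies in the weakly compact unit ball, so it has a weak cluster point `ξ₀`.
Since `π a` is weakly continuous, `π a ξ₀` is a weak cluster point of `π a (ξ (u i)) = ξ (a * u i)`,
which converges in norm to `ξ a`; weak limits being unique, `π a ξ₀ = ξ a`. -/

open Filter Topology

theorem MapClusterPt.eq_of_tendsto {ι X : Type*} [TopologicalSpace X] [T2Space X] {l : Filter ι}
    {u : ι → X} {x y : X} (hx : MapClusterPt x l u) (hy : Tendsto u l (𝓝 y)) : x = y :=
  eq_of_nhds_neBot (hx.clusterPt.neBot.mono (inf_le_inf_left _ hy))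

theorem ContinuousLinearMap.apply_eq_of_mapClusterPt_weakSpace {ι 𝕜 E F : Type*} [CommRing 𝕜]
    [TopologicalSpace 𝕜] [T2Space 𝕜] [ContinuousAdd 𝕜] [ContinuousConstSMul 𝕜 𝕜]
    [AddCommGroup E] [Module 𝕜 E] [TopologicalSpace E]
    [AddCommGroup F] [Module 𝕜 F] [TopologicalSpace F] [SeparatingDual 𝕜 F]
    (T : E →L[𝕜] F) {l : Filter ι} {v : ι → E} {x : E} {y : F}
    (hx : MapClusterPt (X := WeakSpace 𝕜 E) x l v) (hy : Tendsto (fun i => T (v i)) l (𝓝 y)) :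
    T x = y :=
  have hTx : MapClusterPt (X := WeakSpace 𝕜 F) (T x) l (fun i => T (v i)) :=
    hx.continuousAt_comp (f := (WeakSpace.map T : WeakSpace 𝕜 E → WeakSpace 𝕜 F))
      (WeakSpace.map T).continuous.continuousAt
  hTx.eq_of_tendsto (((toWeakSpaceCLM 𝕜 F).continuous.tendsto y).comp hy)

theorem stmt_14_general {A V : Type*} [NonUnitalNormedRing A] [NormedSpace ℂ A]
    [NormedAddCommGroup V] [NormedSpace ℂ V]
    (hV : IsCompact (X := WeakSpace ℂ V) (Metric.closedBall (0 : V) 1 : Set V))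
    (π : A → V →L[ℂ] V)
    (ξ : A →L[ℂ] V) (hξ : ‖ξ‖ ≤ 1)
    (hcov : ∀ a b : A, ξ (a * b) = π a (ξ b))
    {ι : Type*} (l : Filter ι) [l.NeBot] (u : ι → A)
    (hu : ∀ i, ‖u i‖ ≤ 1)
    (hai : ∀ a : A, Filter.Tendsto (fun i => a * u i) l (nhds a)) :
    ∃ ξ₀ : V, ‖ξ₀‖ ≤ 1 ∧ ∀ a : A, ξ a = π a ξ₀ := by
  have hball : ∀ i, ξ (u i) ∈ Metric.closedBall (0 : V) 1 := fun i => by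
    simpa using ξ.le_of_opNorm_le_of_le hξ (hu i)
  obtain ⟨ξ₀, hξ₀, hcl⟩ := hV.exists_mapClusterPt (f := l)
    (u := fun i => toWeakSpace ℂ V (ξ (u i))) (tendsto_principal.2 (.of_forall hball))
  refine ⟨ξ₀, mem_closedBall_zero_iff.1 hξ₀, fun a =>
    ((π a).apply_eq_of_mapClusterPt_weakSpace hcl ?_).symm⟩
  exact ((ξ.continuous.tendsto a).comp (hai a)).congr fun i => hcov a (u i)

/-- let `V` be a reflexive Banach space (reflexivity encoded by weak
compactness of the closed unit ball) and `(π, ξ)` a left covariant representation of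
a Banach algebra `A` on `V`: `π` a contractive homomorphism `A → B(V)`, `ξ : A → V` a
contractive linear map with `ξ (a b) = π a (ξ b)`.  If `A` has a bounded approximate
identity `(u i)` with `‖u i‖ ≤ 1`, then there is `ξ₀ ∈ V` with `‖ξ₀‖ ≤ 1` and
`ξ a = π a ξ₀` for all `a`. -/
theorem stmt_14 {A V : Type*} [NonUnitalNormedRing A] [NormedSpace ℂ A]
    [IsScalarTower ℂ A A] [SMulCommClass ℂ A A] [CompleteSpace A]
    [NormedAddCommGroup V] [NormedSpace ℂ V]
    (hV : IsCompact (X := WeakSpace ℂ V) (Metric.closedBall (0 : V) 1 : Set V))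
    (π : A → V →L[ℂ] V) (hπc : ∀ a : A, ‖π a‖ ≤ ‖a‖)
    (hπm : ∀ a b : A, π (a * b) = (π a).comp (π b))
    (ξ : A →L[ℂ] V) (hξ : ‖ξ‖ ≤ 1)
    (hcov : ∀ a b : A, ξ (a * b) = π a (ξ b))
    {ι : Type*} (l : Filter ι) [l.NeBot] (u : ι → A)
    (hu : ∀ i, ‖u i‖ ≤ 1)
    (hai : ∀ a : A, Filter.Tendsto (fun i => a * u i) l (nhds a)) :
    ∃ ξ₀ : V, ‖ξ₀‖ ≤ 1 ∧ ∀ a : A, ξ a = π a ξ₀ :=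
  stmt_14_general hV π ξ hξ hcov l u hu hai
end
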